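/- arXiv:1905.04219 — 2 statements merged into one kernel-verified Lean document; each statement's English description precedes it below -/
import Mathlib

section
/- Let the underlying graph be a path on agents 1,…,n, with σ_0(n) = x and target agent I < n. In every sequence of swaps (σ_0,…,σ_t) with σ_t(I) = x, every swap involving object x transfers x from its current holder to the adjacent agent that is strictly closer to I on the path; i.e., x is never moved away from agent I. -/
/-- The setting of the swap-dynamics model with `N` agents `0, 1, ..., N-1` and
`N` objects, object `j` being the object initially held by agent `j`.
Each agent has a preference list (a duplicate-free list of objects, most preferred
first), and the agents form a social network given by a simple graph. -/
structure SwapModel (N : ℕ) where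
  /-- the preference list of each agent -/
  pref : Fin N → List (Fin N)
  nodup : ∀ i, (pref i).Nodup
  /-- the underlying social network -/
  G : SimpleGraph (Fin N)

namespace SwapModel

variable {N : ℕ}

/-- Agent `i` prefers object `u` to object `v`: both appear on her preference list
and `u` appears (strictly) earlier. -/
def Prefers (M : SwapModel N) (i u v : Fin N) : Prop :=
  ∃ k l : ℕ, k < l ∧ (M.pref i)[k]? = some u ∧ (M.pref i)[l]? = some v

/-- An assignment: a bijection mapping every agent to an object on her list. -/
def IsAssignment (M : SwapModel N) (σ : Fin N → Fin N) : Prop :=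
  Function.Bijective σ ∧ ∀ i, σ i ∈ M.pref i

/-- `(σ 0, σ 1, …, σ t)` is a sequence of swaps: each next assignment arises from
the previous one by performing a swap between two adjacent agents, each of whom
prefers the object of the other agent. -/
def IsSwapSeq (M : SwapModel N) (t : ℕ) (σ : ℕ → Fin N → Fin N) : Prop :=
  M.IsAssignment (σ 0) ∧
    ∀ k, k < t → ∃ i j : Fin N, M.G.Adj i j ∧
      M.Prefers i (σ k j) (σ k i) ∧ M.Prefers j (σ k i) (σ k j) ∧
      σ (k + 1) = σ k ∘ Equiv.swap i j

end SwapModel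

/-- A swap: agent `a1` gives object `o1` to agent `a2` and receives object `o2`;
this records the swap `τ = {{a1, o1}, {a2, o2}}`. -/
structure Swap (N : ℕ) where
  a1 : Fin N
  o1 : Fin N
  a2 : Fin N
  o2 : Fin N

namespace SwapModel

variable {N : ℕ}

/-- The assignment `σ` admits the swap `τ`. -/
def Admitted (M : SwapModel N) (σ : Fin N → Fin N) (τ : Swap N) : Prop :=
  σ τ.a1 = τ.o1 ∧ σ τ.a2 = τ.o2 ∧ M.G.Adj τ.a1 τ.a2 ∧
    M.Prefers τ.a1 τ.o2 τ.o1 ∧ M.Prefers τ.a2 τ.o1 τ.o2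

/-- The assignment obtained from `σ` by performing the swap `τ`. -/
def applySwap (σ : Fin N → Fin N) (τ : Swap N) : Fin N → Fin N :=
  σ ∘ Equiv.swap τ.a1 τ.a2

/-- The assignment obtained from `σ` by performing a sequence of swaps. -/
def applySeq (σ : Fin N → Fin N) : List (Swap N) → (Fin N → Fin N)
  | [] => σ
  | τ :: φ => applySeq (applySwap σ τ) φ

/-- `φ` is a valid swap sequence for the start assignment `σ`. -/
def ValidSeq (M : SwapModel N) (σ : Fin N → Fin N) : List (Swap N) → Prop
  | [] => True
  | τ :: φ => M.Admitted σ τ ∧ M.ValidSeq (applySwap σ τ) φ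

/-- Object `x` is reachable for agent `I` from the initial assignment `σ0`. -/
def Reachable (M : SwapModel N) (σ0 : Fin N → Fin N) (I x : Fin N) : Prop :=
  ∃ φ : List (Swap N), M.ValidSeq σ0 φ ∧ applySeq σ0 φ I = x

end SwapModel

/-- The path graph on `N` agents: agents `i` and `i+1` are adjacent. -/
def pathGraph' (N : ℕ) : SimpleGraph (Fin N) where
  Adj i j := i.val + 1 = j.val ∨ j.val + 1 = i.val
  symm := ⟨by intro i j h; exact h.symm⟩
  loopless := ⟨by intro i h; rcases h with h | h <;> omega⟩

/-- Swap `τ` exchanges the objects `u` and `v`. -/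
def Swap.exchanges {N : ℕ} (τ : Swap N) (u v : Fin N) : Prop :=
  (τ.o1 = u ∧ τ.o2 = v) ∨ (τ.o1 = v ∧ τ.o2 = u)

/-- Swap `τ` takes place over the edge `{j, j+1}` of the path
(agents here being indexed by their `Fin` value). -/
def Swap.onEdge {N : ℕ} (τ : Swap N) (j : ℕ) : Prop :=
  (τ.a1.val = j ∧ τ.a2.val = j + 1) ∨ (τ.a2.val = j ∧ τ.a1.val = j + 1)

namespace SwapModel

variable {N : ℕ}

lemma idx_eq {M : SwapModel N} {i u : Fin N} {k l : ℕ}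
    (hk : (M.pref i)[k]? = some u) (hl : (M.pref i)[l]? = some u) : k = l := by
  rw [List.getElem?_eq_some_iff] at hk hl
  obtain ⟨h1, e1⟩ := hk; obtain ⟨h2, e2⟩ := hl
  exact (List.Nodup.getElem_inj_iff (M.nodup i)).mp (e1.trans e2.symm)

lemma prefers_asymm {M : SwapModel N} {i u v : Fin N}
    (h : M.Prefers i u v) (h' : M.Prefers i v u) : False := by
  obtain ⟨k, l, hkl, hk, hl⟩ := h
  obtain ⟨k', l', hkl', hk', hl'⟩ := h'
  have e1 : l = k' := idx_eq hl hk'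
  have e2 : l' = k := idx_eq hl' hk
  omega

lemma prefers_trans {M : SwapModel N} {i u v w : Fin N}
    (h : M.Prefers i u v) (h' : M.Prefers i v w) : M.Prefers i u w := by
  obtain ⟨k, l, hkl, hk, hl⟩ := h
  obtain ⟨k', l', hkl', hk', hl'⟩ := h'
  have e1 : l = k' := idx_eq hl hk'
  exact ⟨k, l', by omega, hk, hl'⟩

lemma applySwap_a1 (σ : Fin N → Fin N) (τ : Swap N) :
    applySwap σ τ τ.a1 = σ τ.a2 := by
  simp [applySwap]

lemma applySwap_a2 (σ : Fin N → Fin N) (τ : Swap N) :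
    applySwap σ τ τ.a2 = σ τ.a1 := by
  simp [applySwap]

lemma applySwap_other {σ : Fin N → Fin N} {τ : Swap N} {i : Fin N}
    (h1 : i ≠ τ.a1) (h2 : i ≠ τ.a2) : applySwap σ τ i = σ i := by
  simp [applySwap, Equiv.swap_apply_of_ne_of_ne h1 h2]

lemma applySeq_append (σ : Fin N → Fin N) (φ₁ φ₂ : List (Swap N)) :
    applySeq σ (φ₁ ++ φ₂) = applySeq (applySeq σ φ₁) φ₂ := by
  induction φ₁ generalizing σ with
  | nil => rfl
  | cons τ φ ih => simp [applySeq, ih]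

lemma validSeq_append {M : SwapModel N} (σ : Fin N → Fin N) (φ₁ φ₂ : List (Swap N)) :
    M.ValidSeq σ (φ₁ ++ φ₂) ↔ M.ValidSeq σ φ₁ ∧ M.ValidSeq (applySeq σ φ₁) φ₂ := by
  induction φ₁ generalizing σ with
  | nil => simp [ValidSeq, applySeq]
  | cons τ φ ih => simp [ValidSeq, applySeq, ih, and_assoc]

lemma applySeq_injective {σ : Fin N → Fin N} (h : Function.Injective σ)
    (φ : List (Swap N)) : Function.Injective (applySeq σ φ) := by
  induction φ generalizing σ with
  | nil => exact h
  | cons τ φ ih =>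
    exact ih (h.comp (Equiv.swap τ.a1 τ.a2).injective)

lemma improve {M : SwapModel N} {σ : Fin N → Fin N} {φ : List (Swap N)}
    (hv : M.ValidSeq σ φ) (i : Fin N) :
    applySeq σ φ i = σ i ∨ M.Prefers i (applySeq σ φ i) (σ i) := by
  induction φ generalizing σ with
  | nil => exact Or.inl rfl
  | cons τ φ ih =>
    simp only [ValidSeq] at hv
    obtain ⟨hadm, hv⟩ := hv
    have step : applySwap σ τ i = σ i ∨ M.Prefers i (applySwap σ τ i) (σ i) := by
      by_cases h1 : i = τ.a1
      · subst h1
        rw [applySwap_a1, hadm.1, hadm.2.1]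
        exact Or.inr hadm.2.2.2.1
      by_cases h2 : i = τ.a2
      · subst h2
        rw [applySwap_a2, hadm.1, hadm.2.1]
        exact Or.inr hadm.2.2.2.2
      · exact Or.inl (applySwap_other h1 h2)
    have hrest := ih hv
    show applySeq (applySwap σ τ) φ i = σ i ∨
      M.Prefers i (applySeq (applySwap σ τ) φ i) (σ i)
    rcases hrest with h | h <;> rcases step with h' | h'
    · exact Or.inl (h.trans h')
    · exact Or.inr (h ▸ h')
    · exact Or.inr (h' ▸ h)
    · exact Or.inr (prefers_trans h h')

lemma cross {M : SwapModel N} (hG : M.G = pathGraph' N) {σ : Fin N → Fin N}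
    (hinj : Function.Injective σ) {φ : List (Swap N)} (hv : M.ValidSeq σ φ)
    {x b c p : Fin N} (hb : σ b = x) (hc : applySeq σ φ c = x)
    (hp : (c.val ≤ p.val ∧ p.val < b.val) ∨ (b.val < p.val ∧ p.val ≤ c.val)) :
    ∃ ψ τ ψ', φ = ψ ++ τ :: ψ' ∧ M.Admitted (applySeq σ ψ) τ ∧
      applySeq σ ψ p ≠ x ∧ applySwap (applySeq σ ψ) τ p = x := by
  induction φ generalizing σ b with
  | nil =>
    have hbc : b = c := hinj (hb.trans hc.symm)
    have : b.val = c.val := congrArg Fin.val hbc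
    omega
  | cons τ φ ih =>
    simp only [ValidSeq] at hv
    obtain ⟨hadm, hv⟩ := hv
    have hc' : applySeq (applySwap σ τ) φ c = x := hc
    have hinj₁ : Function.Injective (applySwap σ τ) :=
      hinj.comp (Equiv.swap τ.a1 τ.a2).injective
    have hb₁ : applySwap σ τ (Equiv.swap τ.a1 τ.a2 b) = x := by
      simp [applySwap, hb]
    have hadj : τ.a1.val + 1 = τ.a2.val ∨ τ.a2.val + 1 = τ.a1.val := by
      have h := hadm.2.2.1; rw [hG] at h; exact h
    set b₁ := Equiv.swap τ.a1 τ.a2 b with hb₁def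
    have hnear : b₁.val = b.val ∨ b₁.val + 1 = b.val ∨ b.val + 1 = b₁.val := by
      by_cases h1 : b = τ.a1
      · subst h1
        rw [hb₁def, Equiv.swap_apply_left]
        omega
      by_cases h2 : b = τ.a2
      · subst h2
        rw [hb₁def, Equiv.swap_apply_right]
        omega
      · rw [hb₁def, Equiv.swap_apply_of_ne_of_ne h1 h2]
        exact Or.inl rfl
    by_cases hcase : (c.val ≤ p.val ∧ p.val < b₁.val) ∨ (b₁.val < p.val ∧ p.val ≤ c.val)
    · obtain ⟨ψ, τ', ψ', heq, h1, h2, h3⟩ := ih hinj₁ hv hb₁ hc' hcase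
      exact ⟨τ :: ψ, τ', ψ', by simp [heq], h1, h2, h3⟩
    · push_neg at hcase
      have hbp : b₁.val = p.val := by omega
      have hbp' : b₁ = p := Fin.ext hbp
      refine ⟨[], τ, φ, rfl, hadm, ?_, ?_⟩
      · intro hpx
        have : p = b := hinj (hpx.trans hb.symm)
        have : p.val = b.val := congrArg Fin.val this
        omega
      · rw [← hbp']; exact hb₁

lemma receive_prefers {M : SwapModel N} {σ : Fin N → Fin N} {τ : Swap N} {p x : Fin N}
    (hadm : M.Admitted σ τ) (hne : σ p ≠ x) (hget : applySwap σ τ p = x) :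
    M.Prefers p x (σ p) := by
  by_cases h1 : p = τ.a1
  · subst h1
    rw [applySwap_a1, hadm.2.1] at hget
    rw [hadm.1]
    exact hget ▸ hadm.2.2.2.1
  by_cases h2 : p = τ.a2
  · subst h2
    rw [applySwap_a2, hadm.1] at hget
    rw [hadm.2.1]
    exact hget ▸ hadm.2.2.2.2
  · rw [applySwap_other h1 h2] at hget
    exact absurd hget hne

lemma key {M : SwapModel N} (hG : M.G = pathGraph' N) {σ' : Fin N → Fin N}
    (hinj : Function.Injective σ') {τ : Swap N} (hadm : M.Admitted σ' τ)
    {β : List (Swap N)} (hv : M.ValidSeq (applySwap σ' τ) β) {I x : Fin N}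
    (hend : applySeq (applySwap σ' τ) β I = x) (ho1 : τ.o1 = x) :
    Nat.dist τ.a2.val I.val < Nat.dist τ.a1.val I.val := by
  by_contra hcon
  obtain ⟨h1, h2, hAdj, hpr1, hpr2⟩ := hadm
  have hadj : τ.a1.val + 1 = τ.a2.val ∨ τ.a2.val + 1 = τ.a1.val := by
    rw [hG] at hAdj; exact hAdj
  have hb : applySwap σ' τ τ.a2 = x := by rw [applySwap_a2, h1, ho1]
  have hinj₁ : Function.Injective (applySwap σ' τ) :=
    hinj.comp (Equiv.swap τ.a1 τ.a2).injective
  have hp : (I.val ≤ τ.a1.val ∧ τ.a1.val < τ.a2.val) ∨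
      (τ.a2.val < τ.a1.val ∧ τ.a1.val ≤ I.val) := by
    simp only [Nat.dist] at hcon
    omega
  obtain ⟨ψ, τ', ψ', heq, hadm', hne, hget⟩ :=
    cross hG hinj₁ hv hb hend hp
  have hvψ : M.ValidSeq (applySwap σ' τ) ψ := by
    rw [heq, validSeq_append] at hv
    exact hv.1
  have hpre : M.Prefers τ.a1 x (applySeq (applySwap σ' τ) ψ τ.a1) :=
    receive_prefers hadm' hne hget
  have himp := improve hvψ τ.a1
  rw [applySwap_a1, h2] at himp
  have hxo2 : M.Prefers τ.a1 x τ.o2 := by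
    rcases himp with h | h
    · exact h ▸ hpre
    · exact prefers_trans hpre h
  rw [ho1] at hpr1
  exact prefers_asymm hxo2 hpr1

end SwapModel

/-- The underlying graph is the path on agents `0, 1, …, N`, the
target object `x` is initially held by the last agent, and the target agent `I` is
not the last agent.  In every sequence of swaps after which agent `I` holds `x`,
every swap involving object `x` transfers `x` from its current holder to the adjacent
agent that is strictly closer to `I` on the path; i.e. `x` is never moved away
from agent `I`. -/
theorem statement8 (N : ℕ) (M : SwapModel (N + 1)) (hG : M.G = pathGraph' (N + 1))
    (σ0 : Fin (N + 1) → Fin (N + 1)) (hσ0 : M.IsAssignment σ0)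
    (x : Fin (N + 1)) (hx : σ0 (Fin.last N) = x)
    (I : Fin (N + 1)) (hI : I < Fin.last N)
    (φ : List (Swap (N + 1))) (hvalid : M.ValidSeq σ0 φ)
    (hend : SwapModel.applySeq σ0 φ I = x) :
    ∀ τ ∈ φ, (τ.o1 = x → Nat.dist τ.a2.val I.val < Nat.dist τ.a1.val I.val) ∧
             (τ.o2 = x → Nat.dist τ.a1.val I.val < Nat.dist τ.a2.val I.val) := by
  intro τ hτ
  obtain ⟨α, β, rfl⟩ := List.append_of_mem hτ
  rw [SwapModel.validSeq_append] at hvalid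
  obtain ⟨hα, hv⟩ := hvalid
  simp only [SwapModel.ValidSeq] at hv
  obtain ⟨hadm, hβ⟩ := hv
  rw [SwapModel.applySeq_append] at hend
  have hend' : SwapModel.applySeq
      (SwapModel.applySwap (SwapModel.applySeq σ0 α) τ) β I = x := hend
  have hinj : Function.Injective (SwapModel.applySeq σ0 α) :=
    SwapModel.applySeq_injective hσ0.1.1 α
  constructor
  · intro ho1
    exact SwapModel.key hG hinj hadm hβ hend' ho1
  · intro ho2
    have hadm' : M.Admitted (SwapModel.applySeq σ0 α) ⟨τ.a2, τ.o2, τ.a1, τ.o1⟩ :=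
      ⟨hadm.2.1, hadm.1, hadm.2.2.1.symm, hadm.2.2.2.2, hadm.2.2.2.1⟩
    have hsw : SwapModel.applySwap (SwapModel.applySeq σ0 α) ⟨τ.a2, τ.o2, τ.a1, τ.o1⟩ =
        SwapModel.applySwap (SwapModel.applySeq σ0 α) τ := by
      funext i
      simp [SwapModel.applySwap, Equiv.swap_comm]
    exact SwapModel.key hG hinj hadm' (hsw ▸ hβ) (hsw ▸ hend') ho2
end

section
/- Let the underlying graph be a path on agents 1,…,n, with σ_0(n) = x and target agent I < n. Let (σ_0,…,σ_T) be a sequence of swaps whose last swap gives object x to agent I in exchange for an object z. Then every object whose initial holder lies strictly between the initial holder of z and agent n (the initial holder of x) is swapped with exactly one of the two objects z and x during the sequence. -/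
/-!
Agents only ever improve their holdings, so an agent never gets back an object it has given
away. On a path objects move one step at a time, so an object that has moved past an agent stays
on that side of it; hence two objects are exchanged at most once, and as their relative order
changes only when they are exchanged, they have been exchanged exactly when their order has
flipped. Just before the last swap, `z` is at `I` and `x` at an agent adjacent to `I`, so an
object `u` that started between them now lies either left of both (its order has flipped with `z`
only) or right of both (with `x` only).
-/

namespace Swap

variable {N : ℕ}

def perm (τ : Swap N) : Equiv.Perm (Fin N) := Equiv.swap τ.a1 τ.a2

lemma exchanges_comm {τ : Swap N} {u v : Fin N} : τ.exchanges u v ↔ τ.exchanges v u :=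
  or_comm

lemma exchanges.eq_o1_or_eq_o2 {τ : Swap N} {u v : Fin N} (h : τ.exchanges u v) :
    u = τ.o1 ∨ u = τ.o2 := by
  rcases h with ⟨h, -⟩ | ⟨-, h⟩
  · exact Or.inl h.symm
  · exact Or.inr h.symm

end Swap

lemma lt_apply_iff_of_forall_ne {f : ℕ → ℕ} {c t₀ : ℕ}
    (hstep : ∀ s, f (s + 1) ≤ f s + 1 ∧ f s ≤ f (s + 1) + 1) (hne : ∀ s, t₀ ≤ s → f s ≠ c)
    {t : ℕ} (ht : t₀ ≤ t) : c < f t ↔ c < f t₀ := by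
  induction t, ht using Nat.le_induction with
  | base => rfl
  | succ t ht ih =>
    have := hstep t
    have := hne t ht
    have := hne (t + 1) (by omega)
    omega

namespace SwapModel

variable {N : ℕ} {M : SwapModel N}

lemma pathGraph'_adj {i j : Fin N} :
    (pathGraph' N).Adj i j ↔ i.val + 1 = j.val ∨ j.val + 1 = i.val :=
  Iff.rfl

lemma Prefers.trans {i u v w : Fin N} (h₁ : M.Prefers i u v) (h₂ : M.Prefers i v w) :
    M.Prefers i u w := by
  obtain ⟨k, l, hkl, hk, hl⟩ := h₁
  obtain ⟨k', l', hkl', hk', hl'⟩ := h₂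
  have hlen : l < (M.pref i).length := (List.getElem?_eq_some_iff.mp hl).1
  have : l = k' := (List.getElem?_inj hlen (M.nodup i)).mp (hl.trans hk'.symm)
  exact ⟨k, l', by omega, hk, hl'⟩

lemma Prefers.irrefl {i u : Fin N} : ¬ M.Prefers i u u := by
  rintro ⟨k, l, hkl, hk, hl⟩
  have hlen : k < (M.pref i).length := (List.getElem?_eq_some_iff.mp hk).1
  have : k = l := (List.getElem?_inj hlen (M.nodup i)).mp (hk.trans hl.symm)
  omega

lemma applySeq_eq_comp (σ : Fin N → Fin N) (φ : List (Swap N)) :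
    applySeq σ φ = σ ∘ (φ.map Swap.perm).prod := by
  induction φ generalizing σ with
  | nil => rfl
  | cons τ φ ih =>
    simp only [applySeq, ih, applySwap, List.map_cons, List.prod_cons, Equiv.Perm.coe_mul,
      Swap.perm, Function.comp_assoc]

def assignAt (σ₀ : Fin N → Fin N) (φ : List (Swap N)) (t : ℕ) : Fin N → Fin N :=
  applySeq σ₀ (φ.take t)

/-- Objects are tracked by their initial holder: `holder φ t a` is the agent holding, after
the first `t` swaps of `φ`, the object initially held by agent `a`. -/
def holder (φ : List (Swap N)) (t : ℕ) : Equiv.Perm (Fin N) :=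
  ((φ.take t).map Swap.perm).prod⁻¹

variable {σ₀ : Fin N → Fin N} {φ : List (Swap N)} {s t : ℕ} {i a b : Fin N}

lemma assignAt_apply : assignAt σ₀ φ t i = σ₀ ((holder φ t)⁻¹ i) := by
  simp [assignAt, holder, applySeq_eq_comp]

lemma assignAt_holder : assignAt σ₀ φ t (holder φ t a) = σ₀ a := by
  simp [assignAt_apply]

lemma holder_eq_of_assignAt_eq (hσ₀ : Function.Injective σ₀) (h : assignAt σ₀ φ t i = σ₀ a) :
    holder φ t a = i := by
  rwa [assignAt_apply, hσ₀.eq_iff, Equiv.Perm.inv_eq_iff_eq, eq_comm] at h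

lemma holder_zero : holder φ 0 a = a := by
  simp [holder]

lemma take_succ_map_perm_prod (ht : t < φ.length) :
    ((φ.take (t + 1)).map Swap.perm).prod = ((φ.take t).map Swap.perm).prod * φ[t].perm := by
  rw [List.take_add_one, List.getElem?_eq_getElem ht, Option.toList_some, List.map_append,
    List.prod_append, List.map_singleton, List.prod_singleton]

lemma holder_succ (ht : t < φ.length) : holder φ (t + 1) a = φ[t].perm (holder φ t a) := by
  rw [holder, take_succ_map_perm_prod ht, mul_inv_rev, Equiv.Perm.mul_apply, Swap.perm,
    Equiv.swap_inv, holder]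

lemma holder_succ_of_length_le (ht : φ.length ≤ t) : holder φ (t + 1) = holder φ t := by
  rw [holder, holder, List.take_of_length_le ht, List.take_of_length_le (by omega)]

lemma assignAt_succ (ht : t < φ.length) :
    assignAt σ₀ φ (t + 1) i = assignAt σ₀ φ t (φ[t].perm i) := by
  simp only [assignAt, applySeq_eq_comp, take_succ_map_perm_prod ht, Function.comp_apply,
    Equiv.Perm.mul_apply]

lemma assignAt_succ_of_length_le (ht : φ.length ≤ t) :
    assignAt σ₀ φ (t + 1) = assignAt σ₀ φ t := by
  rw [assignAt, assignAt, List.take_of_length_le ht, List.take_of_length_le (by omega)]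

lemma ValidSeq.admitted_assignAt (hval : M.ValidSeq σ₀ φ) (ht : t < φ.length) :
    M.Admitted (assignAt σ₀ φ t) φ[t] := by
  induction φ generalizing σ₀ t with
  | nil => simp at ht
  | cons τ φ ih =>
    cases t with
    | zero => exact hval.1
    | succ t => exact ih hval.2 (by simpa using ht)

lemma ValidSeq.prefers_assignAt_succ (hval : M.ValidSeq σ₀ φ) (ht : t < φ.length)
    (hi : i = φ[t].a1 ∨ i = φ[t].a2) :
    M.Prefers i (assignAt σ₀ φ (t + 1) i) (assignAt σ₀ φ t i) := by
  obtain ⟨h₁, h₂, -, hp₁, hp₂⟩ := hval.admitted_assignAt ht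
  rw [assignAt_succ ht, Swap.perm]
  rcases hi with rfl | rfl
  · rwa [Equiv.swap_apply_left, h₁, h₂]
  · rwa [Equiv.swap_apply_right, h₁, h₂]

lemma ValidSeq.assignAt_eq_or_prefers (hval : M.ValidSeq σ₀ φ) (hst : s ≤ t) (i : Fin N) :
    assignAt σ₀ φ t i = assignAt σ₀ φ s i ∨
      M.Prefers i (assignAt σ₀ φ t i) (assignAt σ₀ φ s i) := by
  induction t, hst using Nat.le_induction with
  | base => exact Or.inl rfl
  | succ t hst ih =>
    have hstep : assignAt σ₀ φ (t + 1) i = assignAt σ₀ φ t i ∨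
        M.Prefers i (assignAt σ₀ φ (t + 1) i) (assignAt σ₀ φ t i) := by
      by_cases ht : t < φ.length
      · by_cases hi : i = φ[t].a1 ∨ i = φ[t].a2
        · exact Or.inr (hval.prefers_assignAt_succ ht hi)
        · rw [not_or] at hi
          rw [assignAt_succ ht, Swap.perm, Equiv.swap_apply_of_ne_of_ne hi.1 hi.2]
          exact Or.inl rfl
      · exact Or.inl (by rw [assignAt_succ_of_length_le (by omega)])
    rcases hstep with h | h
    · rwa [h]
    · rcases ih with h' | h'
      · rw [← h']; exact Or.inr h
      · exact Or.inr (h.trans h')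

lemma ValidSeq.holder_ne_of_lt (hval : M.ValidSeq σ₀ φ)
    (hmove : holder φ (t + 1) a ≠ holder φ t a) (hts : t < s) : holder φ s a ≠ holder φ t a := by
  have ht : t < φ.length := by
    by_contra! ht
    exact hmove (by rw [holder_succ_of_length_le ht])
  have hp : holder φ t a = φ[t].a1 ∨ holder φ t a = φ[t].a2 := by
    by_contra! hp
    exact hmove (by rw [holder_succ ht, Swap.perm, Equiv.swap_apply_of_ne_of_ne hp.1 hp.2])
  have hbetter : M.Prefers (holder φ t a) (assignAt σ₀ φ s (holder φ t a)) (σ₀ a) := by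
    rw [← assignAt_holder (σ₀ := σ₀) (t := t)]
    have h := hval.prefers_assignAt_succ ht hp
    rcases hval.assignAt_eq_or_prefers hts (holder φ t a) with h' | h'
    · rwa [h']
    · exact h'.trans h
  intro hs
  rw [← hs, assignAt_holder] at hbetter
  exact Prefers.irrefl hbetter

lemma ValidSeq.holder_succ_le (hG : M.G = pathGraph' N) (hval : M.ValidSeq σ₀ φ) (t : ℕ)
    (a : Fin N) :
    (holder φ (t + 1) a : ℕ) ≤ holder φ t a + 1 ∧ (holder φ t a : ℕ) ≤ holder φ (t + 1) a + 1 := by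
  by_cases ht : t < φ.length
  · have hadj : M.G.Adj φ[t].a1 φ[t].a2 := (hval.admitted_assignAt ht).2.2.1
    rw [hG, pathGraph'_adj] at hadj
    rw [holder_succ ht, Swap.perm, Equiv.swap_apply_def]
    split_ifs <;> omega
  · rw [holder_succ_of_length_le (by omega)]
    omega

lemma ValidSeq.lt_holder_iff (hG : M.G = pathGraph' N) (hval : M.ValidSeq σ₀ φ)
    (hmove : holder φ (t + 1) a ≠ holder φ t a) (hts : t < s) :
    holder φ t a < holder φ s a ↔ holder φ t a < holder φ (t + 1) a := by
  have := lt_apply_iff_of_forall_ne (f := fun s => (holder φ s a : ℕ)) (c := holder φ t a)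
    (hval.holder_succ_le hG · a)
    (fun s hs => Fin.val_ne_of_ne (hval.holder_ne_of_lt hmove (by omega))) (t := s) hts
  rwa [Fin.lt_def, Fin.lt_def]

lemma ValidSeq.exchanges_iff (hσ₀ : Function.Injective σ₀) (hval : M.ValidSeq σ₀ φ)
    (ht : t < φ.length) :
    φ[t].exchanges (σ₀ a) (σ₀ b) ↔
      (holder φ t a = φ[t].a1 ∧ holder φ t b = φ[t].a2) ∨
        (holder φ t a = φ[t].a2 ∧ holder φ t b = φ[t].a1) := by
  obtain ⟨h₁, h₂, -⟩ := hval.admitted_assignAt ht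
  simp only [Swap.exchanges, ← h₁, ← h₂, assignAt_apply, hσ₀.eq_iff, Equiv.Perm.inv_eq_iff_eq,
    @eq_comm _ φ[t].a1, @eq_comm _ φ[t].a2]
  tauto

lemma ValidSeq.holder_succ_of_exchanges (hσ₀ : Function.Injective σ₀) (hval : M.ValidSeq σ₀ φ)
    (ht : t < φ.length) (hex : φ[t].exchanges (σ₀ a) (σ₀ b)) :
    holder φ (t + 1) a = holder φ t b ∧ holder φ (t + 1) b = holder φ t a := by
  simp only [holder_succ ht, Swap.perm]
  rcases (hval.exchanges_iff hσ₀ ht).mp hex with ⟨ha, hb⟩ | ⟨ha, hb⟩ <;>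
    simp [ha, hb]

lemma ValidSeq.holder_succ_lt_iff (hG : M.G = pathGraph' N) (hσ₀ : Function.Injective σ₀)
    (hval : M.ValidSeq σ₀ φ) (hab : a ≠ b) (ht : t < φ.length)
    (hex : ¬ φ[t].exchanges (σ₀ a) (σ₀ b)) :
    holder φ (t + 1) a < holder φ (t + 1) b ↔ holder φ t a < holder φ t b := by
  have hadj : M.G.Adj φ[t].a1 φ[t].a2 := (hval.admitted_assignAt ht).2.2.1
  rw [hG, pathGraph'_adj] at hadj
  have hne : holder φ t a ≠ holder φ t b := (holder φ t).injective.ne hab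
  rw [hval.exchanges_iff hσ₀ ht] at hex
  rw [holder_succ ht, holder_succ ht, Swap.perm, Equiv.swap_apply_def, Equiv.swap_apply_def]
  simp only [Fin.ext_iff, Fin.lt_def] at hex hne ⊢
  split_ifs <;> omega

lemma ValidSeq.holder_lt_iff_of_forall_not_exchanges (hG : M.G = pathGraph' N)
    (hσ₀ : Function.Injective σ₀) (hval : M.ValidSeq σ₀ φ) (hab : a ≠ b)
    (hno : ∀ k (hk : k < φ.length), s ≤ k → k < t → ¬ φ[k].exchanges (σ₀ a) (σ₀ b))
    (hst : s ≤ t) : holder φ t a < holder φ t b ↔ holder φ s a < holder φ s b := by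
  induction t, hst using Nat.le_induction with
  | base => rfl
  | succ t hst ih =>
    rw [← ih fun k hk hsk hkt => hno k hk hsk (by omega)]
    by_cases ht : t < φ.length
    · exact hval.holder_succ_lt_iff hG hσ₀ hab ht (hno t ht hst (by omega))
    · rw [holder_succ_of_length_le (by omega)]

/-- After `a` and `b` are exchanged, `a` stays beyond the agent it left and `b` stays short of
the agent it left, so they are never adjacent in the order needed to be exchanged again. -/
lemma ValidSeq.not_exchanges_of_exchanges_of_lt (hG : M.G = pathGraph' N)
    (hσ₀ : Function.Injective σ₀) (hval : M.ValidSeq σ₀ φ) {t₁ t₂ : ℕ} (h₁₂ : t₁ < t₂)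
    (ht₁ : t₁ < φ.length) (ht₂ : t₂ < φ.length) (hex₁ : φ[t₁].exchanges (σ₀ a) (σ₀ b))
    (hord : holder φ t₁ a < holder φ t₁ b) : ¬ φ[t₂].exchanges (σ₀ a) (σ₀ b) := by
  intro hex₂
  obtain ⟨ha₁, hb₁⟩ := hval.holder_succ_of_exchanges hσ₀ ht₁ hex₁
  obtain ⟨ha₂, -⟩ := hval.holder_succ_of_exchanges hσ₀ ht₂ hex₂
  have hma : holder φ (t₁ + 1) a ≠ holder φ t₁ a := by rw [ha₁]; exact hord.ne'
  have hmb : holder φ (t₁ + 1) b ≠ holder φ t₁ b := by rw [hb₁]; exact hord.ne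
  have hright := (hval.lt_holder_iff hG hma (s := t₂ + 1) (by omega)).mpr
    (by rw [ha₁]; exact hord)
  have hleft := (hval.lt_holder_iff hG hmb (s := t₂) h₁₂).not.mpr
    (by rw [hb₁]; exact hord.not_gt)
  have hleft_ne := hval.holder_ne_of_lt hmb h₁₂
  have hstep := (hval.holder_succ_le hG t₁ a).1
  rw [ha₁] at hstep
  rw [ha₂] at hright
  omega

lemma ValidSeq.not_exchanges_of_exchanges (hG : M.G = pathGraph' N)
    (hσ₀ : Function.Injective σ₀) (hval : M.ValidSeq σ₀ φ) (hab : a ≠ b) {t₁ t₂ : ℕ}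
    (h₁₂ : t₁ < t₂) (ht₁ : t₁ < φ.length) (ht₂ : t₂ < φ.length)
    (hex₁ : φ[t₁].exchanges (σ₀ a) (σ₀ b)) : ¬ φ[t₂].exchanges (σ₀ a) (σ₀ b) := by
  rcases lt_or_gt_of_ne ((holder φ t₁).injective.ne hab) with hord | hord
  · exact hval.not_exchanges_of_exchanges_of_lt hG hσ₀ h₁₂ ht₁ ht₂ hex₁ hord
  · rw [Swap.exchanges_comm] at hex₁ ⊢
    exact hval.not_exchanges_of_exchanges_of_lt hG hσ₀ h₁₂ ht₁ ht₂ hex₁ hord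

lemma ValidSeq.exists_mem_take_exchanges_iff (hG : M.G = pathGraph' N)
    (hσ₀ : Function.Injective σ₀) (hval : M.ValidSeq σ₀ φ) (hab : a ≠ b) {T : ℕ}
    (hT : T ≤ φ.length) :
    (∃ τ ∈ φ.take T, τ.exchanges (σ₀ a) (σ₀ b)) ↔ ¬ (holder φ T a < holder φ T b ↔ a < b) := by
  simp only [List.mem_take_iff_getElem]
  constructor
  · rintro ⟨_, ⟨t, htT, rfl⟩, hex⟩
    have ht : t < φ.length := by omega
    have hno : ∀ k (hk : k < φ.length), k ≠ t → ¬ φ[k].exchanges (σ₀ a) (σ₀ b) := by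
      intro k hk hkt
      rcases lt_or_gt_of_ne hkt with hkt | hkt
      · exact fun hk' => hval.not_exchanges_of_exchanges hG hσ₀ hab hkt hk ht hk' hex
      · exact hval.not_exchanges_of_exchanges hG hσ₀ hab hkt ht hk hex
    have hbefore := hval.holder_lt_iff_of_forall_not_exchanges hG hσ₀ hab (s := 0)
      (fun k hk _ hkt => hno k hk hkt.ne) t.zero_le
    have hafter := hval.holder_lt_iff_of_forall_not_exchanges hG hσ₀ hab (s := t + 1)
      (fun k hk hk' _ => hno k hk (by omega)) (show t + 1 ≤ T by omega)
    obtain ⟨ha, hb⟩ := hval.holder_succ_of_exchanges hσ₀ ht hex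
    have hne : holder φ t a ≠ holder φ t b := (holder φ t).injective.ne hab
    rw [holder_zero, holder_zero] at hbefore
    rw [hafter, ha, hb, ← hbefore]
    omega
  · intro hflip
    by_contra! hno
    apply hflip
    rw [hval.holder_lt_iff_of_forall_not_exchanges hG hσ₀ hab (s := 0)
      (fun k hk _ hkT => hno _ ⟨k, by omega, rfl⟩) T.zero_le, holder_zero, holder_zero]

end SwapModel

theorem statement11_general (N : ℕ) (M : SwapModel (N + 1)) (hG : M.G = pathGraph' (N + 1))
    (σ0 : Fin (N + 1) → Fin (N + 1)) (hσ0 : M.IsAssignment σ0)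
    (x : Fin (N + 1)) (hx : σ0 (Fin.last N) = x)
    (I : Fin (N + 1))
    (z : Fin (N + 1)) (φ₀ : List (Swap (N + 1))) (τl : Swap (N + 1))
    (hvalid : M.ValidSeq σ0 (φ₀ ++ [τl]))
    (hτl : (τl.a1 = I ∧ τl.o1 = z ∧ τl.o2 = x) ∨
           (τl.a2 = I ∧ τl.o2 = z ∧ τl.o1 = x)) :
    ∀ (u : Fin (N + 1)) (az au : Fin (N + 1)), σ0 az = z → σ0 au = u →
      az < au → au < Fin.last N →
      Xor' (∃ τ ∈ φ₀ ++ [τl], τ.exchanges u z) (∃ τ ∈ φ₀ ++ [τl], τ.exchanges u x) := by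
  rintro u az au rfl rfl hzu hux
  subst hx
  have hinj : Function.Injective σ0 := hσ0.1.1
  have hT : φ₀.length < (φ₀ ++ [τl]).length := by simp
  have hz := hvalid.exists_mem_take_exchanges_iff hG hinj (a := au) (b := az) (by omega) hT.le
  have hx := hvalid.exists_mem_take_exchanges_iff hG hinj (a := au) (b := Fin.last N)
    (by omega) hT.le
  rw [List.take_left] at hz hx
  set H := SwapModel.holder (φ₀ ++ [τl]) φ₀.length
  obtain ⟨J, hzI, hxJ, hIJ⟩ : ∃ J, H az = I ∧ H (Fin.last N) = J ∧ M.G.Adj I J := by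
    obtain ⟨h₁, h₂, hadj, -⟩ := hvalid.admitted_assignAt hT
    rw [List.getElem_concat_length rfl hT] at h₁ h₂ hadj
    rcases hτl with ⟨rfl, hzo, hxo⟩ | ⟨rfl, hzo, hxo⟩
    · exact ⟨τl.a2, SwapModel.holder_eq_of_assignAt_eq hinj (h₁.trans hzo),
        SwapModel.holder_eq_of_assignAt_eq hinj (h₂.trans hxo), hadj⟩
    · exact ⟨τl.a1, SwapModel.holder_eq_of_assignAt_eq hinj (h₂.trans hzo),
        SwapModel.holder_eq_of_assignAt_eq hinj (h₁.trans hxo), hadj.symm⟩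
  have hlast : ∀ v, ¬ τl.exchanges (σ0 au) v := by
    intro v h
    have h := h.eq_o1_or_eq_o2
    rcases hτl with ⟨-, hzo, hxo⟩ | ⟨-, hzo, hxo⟩ <;> rw [hzo, hxo] at h <;>
      rcases h with h | h <;> have := hinj h <;> omega
  simp only [List.mem_append, List.mem_singleton, or_and_right, exists_or, exists_eq_left,
    hlast, or_false, hz, hx, hzI, hxJ]
  have hI : H au ≠ I := hzI ▸ H.injective.ne hzu.ne'
  have hJ : H au ≠ J := hxJ ▸ H.injective.ne hux.ne
  rw [hG, SwapModel.pathGraph'_adj] at hIJ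
  exact (xor_iff_not_iff _ _).mpr (by omega)

/-- The underlying graph is the path on agents `0, 1, …, N`, the
target object `x` is initially held by the last agent, and the target agent `I` is not
the last agent.  Let `(σ0, …, σT)` be a sequence of swaps whose last swap gives object
`x` to agent `I` in exchange for an object `z`.  Then every object `u` whose initial
holder lies strictly between the initial holder of `z` and the last agent (the initial
holder of `x`) is swapped with exactly one of the two objects `z` and `x` during the
sequence. -/
theorem statement11 (N : ℕ) (M : SwapModel (N + 1)) (hG : M.G = pathGraph' (N + 1))
    (σ0 : Fin (N + 1) → Fin (N + 1)) (hσ0 : M.IsAssignment σ0)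
    (x : Fin (N + 1)) (hx : σ0 (Fin.last N) = x)
    (I : Fin (N + 1)) (hI : I < Fin.last N)
    (z : Fin (N + 1)) (φ₀ : List (Swap (N + 1))) (τl : Swap (N + 1))
    (hvalid : M.ValidSeq σ0 (φ₀ ++ [τl]))
    (hτl : (τl.a1 = I ∧ τl.o1 = z ∧ τl.o2 = x) ∨
           (τl.a2 = I ∧ τl.o2 = z ∧ τl.o1 = x)) :
    ∀ (u : Fin (N + 1)) (az au : Fin (N + 1)), σ0 az = z → σ0 au = u →
      az < au → au < Fin.last N →
      Xor' (∃ τ ∈ φ₀ ++ [τl], τ.exchanges u z) (∃ τ ∈ φ₀ ++ [τl], τ.exchanges u x) :=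
  statement11_general N M hG σ0 hσ0 x hx I z φ₀ τl hvalid hτl
end
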